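/- Fix n ≥ 2. Let 𝒫_n(R) denote the set of Perron numbers λ ≤ R whose minimal polynomial over ℚ has degree n. Then there exists a constant C > 0 such that for all sufficiently large R, (1/C) · R^{n(n+1)/2} ≤ |𝒫_n(R)| ≤ C · R^{n(n+1)/2}. -/

import Mathlib

open Polynomial

/-- A Perron number: a real algebraic integer `λ > 1` all of whose Galois conjugates
`μ ≠ λ` satisfy `|μ| < λ`. -/
def IsPerronNumber (l : ℝ) : Prop :=
  1 < l ∧ IsIntegral ℤ l ∧
    ∀ μ ∈ (minpoly ℚ l).aroots ℂ, μ ≠ (l : ℂ) → ‖μ‖ < l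

/-- The set of Perron numbers `λ ≤ R` whose minimal polynomial over `ℚ` has degree `n`. -/
noncomputable def perronNumbers (n : ℕ) (R : ℝ) : Set ℝ :=
  {l | IsPerronNumber l ∧ l ≤ R ∧ (minpoly ℚ l).natDegree = n}

/-!
A Perron number `λ ≤ R` is the unique root of maximal modulus of its minimal polynomial, so it is
determined by the `n` lower coefficients of that polynomial; all roots have modulus at most `R`,
so the coefficient of `X ^ i` is at most `2 ^ n * R ^ (n - i)` in absolute value. Counting
integer vectors in this box gives the upper bound `≪ ∏ R ^ (n - i) = R ^ (n (n + 1) / 2)`.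

Conversely, for integers `a i ≡ 2 (mod 4)` with `1 ≤ a i ≪ R ^ (n - i) / n` we have
`∑ a i R ^ i < R ^ n`, so `X ^ n - ∑ a i X ^ i` has a root in `(1, R)`; it is Eisenstein at `2`,
hence the minimal polynomial of that root, and positivity of the `a i` makes the root strictly
dominate all its conjugates. This box again has `≫ R ^ (n (n + 1) / 2)` points.
-/

open Finset

section DominantRoot

variable {n : ℕ} {l : ℝ}

theorem sum_mul_pow_lt_pow_of_lt {a : Fin n → ℝ} (ha : ∀ i, 0 ≤ a i) (hl : 0 < l)
    (hroot : l ^ n = ∑ i, a i * l ^ (i : ℕ)) {t : ℝ} (hlt : l < t) :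
    ∑ i, a i * t ^ (i : ℕ) < t ^ n := by
  set s := t / l
  have hs : 1 < s := (one_lt_div hl).2 hlt
  have ht : t = s * l := (div_mul_cancel₀ t hl.ne').symm
  have key : s * ∑ i, a i * t ^ (i : ℕ) ≤ t ^ n := calc
    s * ∑ i, a i * t ^ (i : ℕ) = ∑ i : Fin n, a i * l ^ (i : ℕ) * s ^ ((i : ℕ) + 1) := by
      rw [mul_sum]
      refine sum_congr rfl fun i _ => ?_
      rw [ht, mul_pow, pow_succ]
      ring
    _ ≤ ∑ i : Fin n, a i * l ^ (i : ℕ) * s ^ n :=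
      sum_le_sum fun i _ => mul_le_mul_of_nonneg_left (pow_le_pow_right₀ hs.le i.2)
        (mul_nonneg (ha i) (pow_nonneg hl.le _))
    _ = t ^ n := by rw [← sum_mul, ← hroot, ht, mul_pow, mul_comm]
  have htn : 0 < t ^ n := pow_pos (hl.trans hlt) n
  by_contra! h
  nlinarith

theorem norm_le_of_pow_eq_sum {a : Fin n → ℝ} (ha : ∀ i, 0 ≤ a i) (hl : 0 < l)
    (hroot : l ^ n = ∑ i, a i * l ^ (i : ℕ)) {μ : ℂ}
    (hμ : μ ^ n = ∑ i, (a i : ℂ) * μ ^ (i : ℕ)) : ‖μ‖ ≤ l := by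
  by_contra! h
  have : ‖μ‖ ^ n ≤ ∑ i, a i * ‖μ‖ ^ (i : ℕ) := calc
    ‖μ‖ ^ n = ‖∑ i, (a i : ℂ) * μ ^ (i : ℕ)‖ := by rw [← hμ, norm_pow]
    _ ≤ ∑ i, ‖(a i : ℂ) * μ ^ (i : ℕ)‖ := norm_sum_le _ _
    _ = ∑ i, a i * ‖μ‖ ^ (i : ℕ) := by
      simp only [norm_mul, norm_pow, Complex.norm_real, Real.norm_of_nonneg (ha _)]
  exact this.not_gt (sum_mul_pow_lt_pow_of_lt ha hl hroot h)

theorem eq_of_pow_eq_sum_of_norm_eq {m : ℕ} {a : Fin (m + 1) → ℝ} (ha : ∀ i, 0 ≤ a i)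
    (hlast : 0 < a (Fin.last m)) (hl : 0 < l) (hroot : l ^ (m + 1) = ∑ i, a i * l ^ (i : ℕ))
    {μ : ℂ} (hμ : μ ^ (m + 1) = ∑ i, (a i : ℂ) * μ ^ (i : ℕ)) (hnorm : ‖μ‖ = l) :
    μ = l := by
  set w := ∑ i : Fin m, (a i.castSucc : ℂ) * μ ^ (i : ℕ)
  set z := (a (Fin.last m) : ℂ) * μ ^ m
  have hμ0 : μ ≠ 0 := norm_pos_iff.1 (hnorm ▸ hl)
  have hz0 : z ≠ 0 := mul_ne_zero (by exact_mod_cast hlast.ne') (pow_ne_zero m hμ0)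
  have hsplit : μ ^ (m + 1) = w + z := by rw [hμ, Fin.sum_univ_castSucc]; rfl
  -- `l` being a root forces equality in the triangle inequality for `w + z`
  have hwz : ‖w + z‖ = ‖w‖ + ‖z‖ := by
    refine le_antisymm (norm_add_le _ _) ?_
    calc ‖w‖ + ‖z‖ ≤ ∑ i : Fin m, a i.castSucc * l ^ (i : ℕ) + a (Fin.last m) * l ^ m := by
          gcongr
          · refine (norm_sum_le _ _).trans_eq (sum_congr rfl fun i _ => ?_)
            rw [norm_mul, norm_pow, hnorm, Complex.norm_real, Real.norm_of_nonneg (ha _)]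
          · rw [norm_mul, norm_pow, hnorm, Complex.norm_real, Real.norm_of_nonneg (ha _)]
      _ = ‖w + z‖ := by
          rw [← hsplit, norm_pow, hnorm, hroot, Fin.sum_univ_castSucc]
          rfl
  obtain ⟨r, hr, hw⟩ := (sameRay_iff_norm_add.2 hwz).exists_nonneg_right hz0
  have hμreal : μ = ((r + 1) * a (Fin.last m) : ℝ) := by
    refine mul_right_cancel₀ (pow_ne_zero m hμ0) ?_
    rw [← pow_succ', hsplit, hw, Complex.real_smul]
    push_cast
    ring
  rw [hμreal, Complex.norm_real, Real.norm_of_nonneg (by positivity)] at hnorm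
  rw [hμreal, hnorm]

theorem norm_lt_of_pow_eq_sum (hn : 0 < n) {a : Fin n → ℝ} (ha : ∀ i, 0 < a i) (hl : 0 < l)
    (hroot : l ^ n = ∑ i, a i * l ^ (i : ℕ)) {μ : ℂ}
    (hμ : μ ^ n = ∑ i, (a i : ℂ) * μ ^ (i : ℕ)) (hne : μ ≠ l) : ‖μ‖ < l := by
  obtain ⟨m, rfl⟩ := Nat.exists_eq_succ_of_ne_zero hn.ne'
  exact (norm_le_of_pow_eq_sum (fun i => (ha i).le) hl hroot hμ).lt_of_ne fun h =>
    hne (eq_of_pow_eq_sum_of_norm_eq (fun i => (ha i).le) (ha _) hl hroot hμ h)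

end DominantRoot

noncomputable def perronPoly {n : ℕ} (a : Fin n → ℤ) : ℤ[X] :=
  X ^ n - ∑ i : Fin n, C (a i) * X ^ (i : ℕ)

section PerronPoly

variable {n : ℕ} (a : Fin n → ℤ)

theorem monic_perronPoly : (perronPoly a).Monic :=
  monic_X_pow_sub (degree_sum_fin_lt a)

theorem natDegree_perronPoly : (perronPoly a).natDegree = n :=
  natDegree_eq_of_degree_eq_some <| by
    rw [perronPoly, degree_sub_eq_left_of_degree_lt] <;> rw [degree_X_pow]
    exact degree_sum_fin_lt a

theorem coeff_perronPoly (i : Fin n) : (perronPoly a).coeff i = -a i := by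
  simp [perronPoly, finsetSum_coeff, coeff_X_pow, i.2.ne, Fin.val_inj]

theorem aeval_perronPoly {S : Type*} [CommRing S] (x : S) :
    aeval x (perronPoly a) = x ^ n - ∑ i, (a i : S) * x ^ (i : ℕ) := by
  simp [perronPoly]

theorem isEisensteinAt_two_perronPoly (hn : 0 < n) (heven : ∀ i, 2 ∣ a i)
    (h0 : ¬ 4 ∣ a ⟨0, hn⟩) : (perronPoly a).IsEisensteinAt (Ideal.span {2}) := by
  refine (monic_perronPoly a).isEisensteinAt_of_mem_of_notMem ?_ (fun {i} hi => ?_) ?_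
  · simp [Ideal.span_singleton_eq_top, Int.isUnit_iff]
  · rw [natDegree_perronPoly] at hi
    rw [show i = ((⟨i, hi⟩ : Fin n) : ℕ) from rfl, coeff_perronPoly, Ideal.mem_span_singleton]
    exact (heven _).neg_right
  · rw [show (0 : ℕ) = ((⟨0, hn⟩ : Fin n) : ℕ) from rfl, coeff_perronPoly,
      Ideal.span_singleton_pow, Ideal.mem_span_singleton, dvd_neg]
    simpa using h0

theorem irreducible_perronPoly (hn : 0 < n) (heven : ∀ i, 2 ∣ a i) (h0 : ¬ 4 ∣ a ⟨0, hn⟩) :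
    Irreducible (perronPoly a) :=
  (isEisensteinAt_two_perronPoly a hn heven h0).irreducible
    ((Ideal.span_singleton_prime two_ne_zero).2 Int.prime_two) (monic_perronPoly a).isPrimitive
    (by rwa [natDegree_perronPoly])

theorem minpoly_int_eq_perronPoly (hn : 0 < n) (heven : ∀ i, 2 ∣ a i) (h0 : ¬ 4 ∣ a ⟨0, hn⟩)
    {S : Type*} [CommRing S] [IsDomain S] [CharZero S] {x : S}
    (hx : aeval x (perronPoly a) = 0) : minpoly ℤ x = perronPoly a := by
  have hint : IsIntegral ℤ x := ⟨_, monic_perronPoly a, by rwa [← aeval_def]⟩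
  have hdvd := minpoly.isIntegrallyClosed_dvd hint hx
  exact eq_of_monic_of_associated (minpoly.monic hint) (monic_perronPoly a)
    (associated_of_dvd_dvd hdvd
      ((minpoly.irreducible hint).dvd_symm (irreducible_perronPoly a hn heven h0) hdvd))

end PerronPoly

namespace IsPerronNumber

variable {l : ℝ}

theorem pos (hl : IsPerronNumber l) : 0 < l := one_pos.trans hl.1

theorem minpoly_rat_eq (hl : IsPerronNumber l) :
    minpoly ℚ l = (minpoly ℤ l).map (algebraMap ℤ ℚ) :=
  minpoly.isIntegrallyClosed_eq_field_fractions' ℚ hl.2.1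

theorem ofReal_mem_aroots (hl : IsPerronNumber l) : (l : ℂ) ∈ (minpoly ℚ l).aroots ℂ := by
  rw [mem_aroots, ← Complex.coe_algebraMap, aeval_algebraMap_apply, minpoly.aeval, map_zero]
  exact ⟨minpoly.ne_zero hl.2.1.tower_top, rfl⟩

theorem norm_le_of_mem_aroots (hl : IsPerronNumber l) {μ : ℂ}
    (hμ : μ ∈ (minpoly ℚ l).aroots ℂ) : ‖μ‖ ≤ l := by
  by_cases h : μ = l
  · rw [h, Complex.norm_real, Real.norm_of_nonneg hl.pos.le]
  · exact (hl.2.2 μ hμ h).le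

theorem eq_of_minpoly_eq (hl : IsPerronNumber l) {l' : ℝ} (hl' : IsPerronNumber l')
    (h : minpoly ℚ l = minpoly ℚ l') : l = l' := by
  by_contra hne
  have h₁ := hl.2.2 l' (h ▸ hl'.ofReal_mem_aroots) (by exact_mod_cast Ne.symm hne)
  have h₂ := hl'.2.2 l (h.symm ▸ hl.ofReal_mem_aroots) (by exact_mod_cast hne)
  rw [Complex.norm_real, Real.norm_of_nonneg hl'.pos.le] at h₁
  rw [Complex.norm_real, Real.norm_of_nonneg hl.pos.le] at h₂
  exact h₁.not_gt h₂

end IsPerronNumber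

section Counting

variable {ι : Type*} [Fintype ι] [DecidableEq ι] {x : ι → ℝ}

theorem subset_piFinset_of_abs_le {S : Set (ι → ℤ)} (hS : ∀ v ∈ S, ∀ i, |(v i : ℝ)| ≤ x i) :
    S ⊆ Fintype.piFinset fun i => Icc (-⌊x i⌋) ⌊x i⌋ := fun v hv => by
  rw [mem_coe, Fintype.mem_piFinset]
  intro i
  have h := abs_le.1 (hS v hv i)
  rw [mem_Icc, neg_le, Int.le_floor, Int.le_floor, Int.cast_neg]
  exact ⟨neg_le.1 h.1, h.2⟩

theorem ncard_le_prod_of_abs_le (hx : ∀ i, 1 ≤ x i) {S : Set (ι → ℤ)}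
    (hS : ∀ v ∈ S, ∀ i, |(v i : ℝ)| ≤ x i) : (S.ncard : ℝ) ≤ ∏ i, 3 * x i := by
  have hfloor : ∀ i, (0 : ℤ) ≤ ⌊x i⌋ := fun i => Int.floor_nonneg.2 (zero_le_one.trans (hx i))
  calc (S.ncard : ℝ) ≤ #(Fintype.piFinset fun i => Icc (-⌊x i⌋) ⌊x i⌋) := by
        rw [← Set.ncard_coe_finset]
        exact_mod_cast Set.ncard_le_ncard (subset_piFinset_of_abs_le hS)
    _ = ∏ i, (2 * ⌊x i⌋ + 1 : ℝ) := by
        rw [Fintype.card_piFinset, Nat.cast_prod]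
        refine prod_congr rfl fun i _ => ?_
        rw [← Int.cast_natCast, Int.card_Icc_of_le _ _ (by linarith [hfloor i])]
        push_cast
        ring
    _ ≤ ∏ i, 3 * x i := prod_le_prod (fun i _ => by linarith [Int.cast_nonneg (R := ℝ) (hfloor i)])
        fun i _ => by linarith [Int.floor_le (x i), hx i]

theorem prod_div_two_le_card_piFinset_Icc_one_floor (hx : ∀ i, 1 ≤ x i) :
    ∏ i, x i / 2 ≤ (#(Fintype.piFinset fun i => Icc 1 ⌊x i⌋) : ℝ) := by
  rw [Fintype.card_piFinset, Nat.cast_prod]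
  refine prod_le_prod (fun i _ => by linarith [hx i]) fun i _ => ?_
  have hfloor : (1 : ℤ) ≤ ⌊x i⌋ := Int.le_floor.2 (by exact_mod_cast hx i)
  have hcard : (#(Icc 1 ⌊x i⌋) : ℝ) = ⌊x i⌋ := by
    rw [← Int.cast_natCast, Int.card_Icc_of_le _ _ (by omega), add_sub_cancel_right]
  have : (1 : ℝ) ≤ ⌊x i⌋ := by exact_mod_cast hfloor
  linarith [Int.lt_floor_add_one (x i)]

end Counting

theorem sum_range_self_sub (n : ℕ) : ∑ i ∈ range n, (n - i) = n * (n + 1) / 2 := by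
  have h := sum_range_reflect (fun i => i) (n + 1)
  rw [sum_range_id, sum_range_succ, Nat.add_sub_cancel, Nat.sub_self, add_zero] at h
  rw [h, mul_comm]

theorem prod_pow_self_sub {M : Type*} [CommMonoid M] (x : M) (n : ℕ) :
    ∏ i : Fin n, x ^ (n - i) = x ^ (n * (n + 1) / 2) := by
  rw [prod_pow_eq_pow_sum, Fin.sum_univ_eq_sum_range (fun i => n - i), sum_range_self_sub]

noncomputable def minpolyCoeffs (n : ℕ) (x : ℝ) : Fin n → ℤ := fun i => (minpoly ℤ x).coeff i

section Upper

variable {n : ℕ} {R l : ℝ}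

theorem natDegree_minpoly_int_of_mem_perronNumbers (hl : l ∈ perronNumbers n R) :
    (minpoly ℤ l).natDegree = n := by
  obtain ⟨hP, -, hdeg⟩ := hl
  rwa [hP.minpoly_rat_eq, natDegree_map_eq_of_injective (algebraMap ℤ ℚ).injective_int] at hdeg

theorem injOn_minpolyCoeffs : Set.InjOn (minpolyCoeffs n) (perronNumbers n R) := by
  intro l hl l' hl' h
  refine hl.1.eq_of_minpoly_eq hl'.1 ?_
  rw [hl.1.minpoly_rat_eq, hl'.1.minpoly_rat_eq]
  congr 1
  rw [(minpoly.monic hl.1.2.1).as_sum, (minpoly.monic hl'.1.2.1).as_sum,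
    natDegree_minpoly_int_of_mem_perronNumbers hl, natDegree_minpoly_int_of_mem_perronNumbers hl',
    ← Fin.sum_univ_eq_sum_range, ← Fin.sum_univ_eq_sum_range]
  exact congrArg (fun c : Fin n → ℤ => X ^ n + ∑ i, C (c i) * X ^ (i : ℕ)) h

theorem abs_coeff_minpoly_le (hl : l ∈ perronNumbers n R) (i : ℕ) :
    |((minpoly ℤ l).coeff i : ℝ)| ≤ 2 ^ n * R ^ (n - i) := by
  obtain ⟨hP, hlR, hdeg⟩ := hl
  have hR : 0 ≤ R := hP.pos.le.trans hlR
  have h := coeff_le_of_roots_le (f := algebraMap ℚ ℂ) (B := R) i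
    (minpoly.monic hP.2.1.tower_top) (IsAlgClosed.splits _)
    fun z hz => (hP.norm_le_of_mem_aroots hz).trans hlR
  rw [coeff_map, hdeg, hP.minpoly_rat_eq, coeff_map] at h
  simp only [algebraMap_int_eq, eq_intCast, map_intCast, Complex.norm_intCast] at h
  calc |((minpoly ℤ l).coeff i : ℝ)| ≤ R ^ (n - i) * n.choose i := by exact_mod_cast h
    _ ≤ R ^ (n - i) * 2 ^ n := by gcongr; exact_mod_cast Nat.choose_le_two_pow n i
    _ = 2 ^ n * R ^ (n - i) := mul_comm _ _

theorem abs_le_of_mem_image_minpolyCoeffs :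
    ∀ v ∈ minpolyCoeffs n '' perronNumbers n R, ∀ i, |(v i : ℝ)| ≤ 2 ^ n * R ^ (n - i) :=
  Set.forall_mem_image.2 fun _ hl i => abs_coeff_minpoly_le hl i

theorem perronNumbers_finite : (perronNumbers n R).Finite :=
  ((Fintype.piFinset _).finite_toSet.subset
    (subset_piFinset_of_abs_le abs_le_of_mem_image_minpolyCoeffs)).of_finite_image
    injOn_minpolyCoeffs

theorem ncard_perronNumbers_le (hR : 1 ≤ R) :
    ((perronNumbers n R).ncard : ℝ) ≤ (3 * 2 ^ n) ^ n * R ^ (n * (n + 1) / 2) := by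
  have hx : ∀ i : Fin n, 1 ≤ 2 ^ n * R ^ (n - i) := fun i =>
    one_le_mul_of_one_le_of_one_le (one_le_pow₀ one_le_two) (one_le_pow₀ hR)
  calc ((perronNumbers n R).ncard : ℝ) = (minpolyCoeffs n '' perronNumbers n R).ncard := by
        rw [injOn_minpolyCoeffs.ncard_image]
    _ ≤ ∏ i : Fin n, 3 * (2 ^ n * R ^ (n - i)) :=
        ncard_le_prod_of_abs_le hx abs_le_of_mem_image_minpolyCoeffs
    _ = (3 * 2 ^ n) ^ n * R ^ (n * (n + 1) / 2) := by
        simp_rw [← mul_assoc]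
        rw [prod_mul_distrib, prod_const, card_univ, Fintype.card_fin, prod_pow_self_sub]

end Upper

section Lower

variable {n : ℕ} {R l : ℝ} {a : Fin n → ℤ}

theorem isPerronNumber_of_aeval_perronPoly_eq_zero (hn : 0 < n) (hpos : ∀ i, 0 < a i)
    (heven : ∀ i, 2 ∣ a i) (h0 : ¬ 4 ∣ a ⟨0, hn⟩) (hl1 : 1 < l)
    (hl : aeval l (perronPoly a) = 0) : IsPerronNumber l := by
  have hmin := minpoly_int_eq_perronPoly a hn heven h0 hl
  have hint : IsIntegral ℤ l := ⟨_, monic_perronPoly a, by rwa [← aeval_def]⟩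
  refine ⟨hl1, hint, fun μ hμ hne => ?_⟩
  rw [minpoly.isIntegrallyClosed_eq_field_fractions' ℚ hint, hmin, mem_aroots,
    aeval_map_algebraMap, aeval_perronPoly, sub_eq_zero] at hμ
  rw [aeval_perronPoly, sub_eq_zero] at hl
  exact norm_lt_of_pow_eq_sum hn (fun i => Int.cast_pos.2 (hpos i)) (one_pos.trans hl1) hl
    (by simpa using hμ.2) hne

theorem exists_mem_perronNumbers_minpolyCoeffs_eq (hn : 0 < n) (hpos : ∀ i, 0 < a i)
    (heven : ∀ i, 2 ∣ a i) (h0 : ¬ 4 ∣ a ⟨0, hn⟩) (hR1 : 1 ≤ R)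
    (hR : ∑ i, (a i : ℝ) * R ^ (i : ℕ) < R ^ n) :
    ∃ l ∈ perronNumbers n R, minpolyCoeffs n l = -a := by
  have ha0 : (2 : ℤ) ≤ a ⟨0, hn⟩ := by
    obtain ⟨k, hk⟩ := heven ⟨0, hn⟩
    have := hpos ⟨0, hn⟩
    omega
  have hval₁ : aeval (1 : ℝ) (perronPoly a) < 0 := by
    have : (a ⟨0, hn⟩ : ℝ) ≤ ∑ i, (a i : ℝ) :=
      single_le_sum (f := fun i => (a i : ℝ)) (fun i _ => Int.cast_nonneg (hpos i).le) (mem_univ _)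
    have : (2 : ℝ) ≤ a ⟨0, hn⟩ := by exact_mod_cast ha0
    simp only [aeval_perronPoly, one_pow, mul_one]
    linarith
  have hvalR : 0 < aeval R (perronPoly a) := by rw [aeval_perronPoly]; linarith
  obtain ⟨l, ⟨hl1, hlR⟩, hl⟩ :=
    intermediate_value_Ioo hR1 (perronPoly a).continuous_aeval.continuousOn ⟨hval₁, hvalR⟩
  have hP := isPerronNumber_of_aeval_perronPoly_eq_zero hn hpos heven h0 hl1 hl
  have hmin := minpoly_int_eq_perronPoly a hn heven h0 hl
  refine ⟨l, ⟨hP, hlR.le, ?_⟩, funext fun i => ?_⟩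
  · rw [hP.minpoly_rat_eq, hmin, (monic_perronPoly a).natDegree_map, natDegree_perronPoly]
  · simp only [minpolyCoeffs, hmin, coeff_perronPoly, Pi.neg_apply]

theorem sum_mul_pow_lt_pow_of_le_div (hn : 0 < n) (hR : 0 < R) {c : Fin n → ℝ}
    (hc : ∀ i, c i ≤ R ^ (n - i) / (2 * n)) : ∑ i, c i * R ^ (i : ℕ) < R ^ n := by
  have hterm : ∀ i : Fin n, c i * R ^ (i : ℕ) ≤ R ^ n / (2 * n) := fun i => by
    calc c i * R ^ (i : ℕ) ≤ R ^ (n - i) / (2 * n) * R ^ (i : ℕ) := by gcongr; exact hc i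
      _ = R ^ n / (2 * n) := by rw [div_mul_eq_mul_div, ← pow_add, Nat.sub_add_cancel i.2.le]
  calc ∑ i, c i * R ^ (i : ℕ) ≤ ∑ _i : Fin n, R ^ n / (2 * n) := sum_le_sum fun i _ => hterm i
    _ = R ^ n / 2 := by
      rw [sum_const, card_univ, Fintype.card_fin, nsmul_eq_mul]
      field_simp
    _ < R ^ n := by linarith [pow_pos hR n]

theorem exists_mem_perronNumbers_minpolyCoeffs_eq_of_le (hn : 0 < n) (hR1 : 1 ≤ R)
    {b : Fin n → ℤ} (hb1 : ∀ i, 1 ≤ b i) (hbR : ∀ i, (b i : ℝ) ≤ R ^ (n - i) / (12 * n)) :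
    ∃ l ∈ perronNumbers n R, minpolyCoeffs n l = fun i => -(4 * b i + 2) := by
  refine exists_mem_perronNumbers_minpolyCoeffs_eq (a := fun i => 4 * b i + 2) hn
    (fun i => by linarith [hb1 i]) (fun i => ⟨2 * b i + 1, by ring⟩) (by omega) hR1
    (sum_mul_pow_lt_pow_of_le_div hn (by linarith) fun i => ?_)
  have hb1' : (1 : ℝ) ≤ b i := by exact_mod_cast hb1 i
  calc ((4 * b i + 2 : ℤ) : ℝ) ≤ 6 * (R ^ (n - i) / (12 * n)) := by push_cast; linarith [hbR i]
    _ = R ^ (n - i) / (2 * n) := by field_simp; ring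

theorem le_ncard_perronNumbers (hn : 0 < n) (hR : 12 * n ≤ R) :
    R ^ (n * (n + 1) / 2) / (24 * n) ^ n ≤ (perronNumbers n R).ncard := by
  have hR1 : 1 ≤ R := le_trans (by norm_cast; omega) hR
  set x : Fin n → ℝ := fun i => R ^ (n - i) / (12 * n)
  have hx : ∀ i, 1 ≤ x i := fun i => by
    rw [one_le_div (by positivity)]
    exact hR.trans (le_self_pow₀ hR1 (by omega))
  set box := Fintype.piFinset fun i => Icc 1 ⌊x i⌋
  set shift : (Fin n → ℤ) → Fin n → ℤ := fun b i => -(4 * b i + 2)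
  have hshift : Set.InjOn shift box := fun b _ b' _ h => funext fun i => by
    have := congrFun h i
    simp only [shift] at this
    omega
  have hmaps : Set.MapsTo shift box (minpolyCoeffs n '' perronNumbers n R) := fun b hb => by
    have hb i := mem_Icc.1 (Fintype.mem_piFinset.1 hb i)
    obtain ⟨l, hl, h⟩ := exists_mem_perronNumbers_minpolyCoeffs_eq_of_le hn hR1
      (fun i => (hb i).1) fun i => Int.le_floor.1 (hb i).2
    exact ⟨l, hl, h⟩
  calc R ^ (n * (n + 1) / 2) / (24 * n) ^ n = ∏ i, x i / 2 := by
        simp only [x, div_div]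
        rw [prod_div_distrib, prod_const, card_univ, Fintype.card_fin, prod_pow_self_sub]
        ring
    _ ≤ #box := prod_div_two_le_card_piFinset_Icc_one_floor hx
    _ = (shift '' box).ncard := by rw [hshift.ncard_image, Set.ncard_coe_finset]
    _ ≤ (minpolyCoeffs n '' perronNumbers n R).ncard := by
        exact_mod_cast Set.ncard_le_ncard hmaps.image_subset (perronNumbers_finite.image _)
    _ ≤ (perronNumbers n R).ncard := by exact_mod_cast Set.ncard_image_le perronNumbers_finite

end Lower

/-- `|𝒫_n(R)| ∼ R^(n(n+1)/2)`: there is `C > 0` with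
`(1/C) · R^(n(n+1)/2) ≤ |𝒫_n(R)| ≤ C · R^(n(n+1)/2)` for all sufficiently large `R`. -/
theorem perronNumbers_card_asymp (n : ℕ) (hn : 2 ≤ n) :
    ∃ C : ℝ, 0 < C ∧ ∀ᶠ R : ℝ in Filter.atTop,
      (1 / C) * R ^ (n * (n + 1) / 2) ≤ ((perronNumbers n R).ncard : ℝ) ∧
      ((perronNumbers n R).ncard : ℝ) ≤ C * R ^ (n * (n + 1) / 2) := by
  have hn0 : 0 < n := by omega
  refine ⟨max ((3 * 2 ^ n) ^ n) ((24 * n : ℝ) ^ n), by positivity, ?_⟩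
  filter_upwards [Filter.eventually_ge_atTop (12 * n : ℝ)] with R hR
  have hR1 : 1 ≤ R := le_trans (by norm_cast; omega) hR
  have hRpow : 0 ≤ R ^ (n * (n + 1) / 2) := pow_nonneg (zero_le_one.trans hR1) _
  constructor
  · calc 1 / max ((3 * 2 ^ n) ^ n) ((24 * n : ℝ) ^ n) * R ^ (n * (n + 1) / 2)
          ≤ R ^ (n * (n + 1) / 2) / (24 * n) ^ n := by
          rw [one_div_mul_eq_div]
          exact div_le_div_of_nonneg_left hRpow (by positivity) (le_max_right _ _)
      _ ≤ (perronNumbers n R).ncard := le_ncard_perronNumbers hn0 hR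
  · exact (ncard_perronNumbers_le hR1).trans (mul_le_mul_of_nonneg_right (le_max_left _ _) hRpow)
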